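/- arXiv:2203.11057 — 2 statements merged into one kernel-verified Lean document; each statement's English description precedes it below -/
import Mathlib

section
/- (Feasibility converse of Lemma 1.) Let u_max > 0 and α ≥ 1 be real constants, e₁ = (1,0), e₂ = (0,1). Let r, ṙ ∈ ℝ² with r ≠ 0 and set r̂ = r/‖r‖. Suppose there exist x, y ∈ {1/α, 1} with ‖ṙ‖ · (x · ⟪e₁, r̂⟫ + y · ⟪e₂, r̂⟫) ≥ ⟪ṙ, r̂⟫. Then the control u = −x·u_max·e₁ − y·u_max·e₂ satisfies ‖u‖_∞ ≤ u_max, ⟪u, e₁⟫ ≤ −u_max/α, ⟪u, e₂⟫ ≤ −u_max/α, and (‖ṙ‖/u_max) · ⟪u, r̂⟫ + ⟪ṙ, r̂⟫ ≤ 0. -/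
open scoped RealInnerProductSpace

noncomputable def e1 : EuclideanSpace ℝ (Fin 2) := EuclideanSpace.single 0 1
noncomputable def e2 : EuclideanSpace ℝ (Fin 2) := EuclideanSpace.single 1 1

/-- Infinity norm on ℝ²: `‖u‖_∞ = max (|⟪u, e₁⟫|) (|⟪u, e₂⟫|)`. -/
noncomputable def infNorm (u : EuclideanSpace ℝ (Fin 2)) : ℝ :=
  max |⟪u, e1⟫| |⟪u, e2⟫|

lemma inner_e1e1 : ⟪e1, e1⟫ = (1:ℝ) := by
  simp [e1, EuclideanSpace.inner_single_left, EuclideanSpace.single_apply]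
lemma inner_e2e2 : ⟪e2, e2⟫ = (1:ℝ) := by
  simp [e2, EuclideanSpace.inner_single_left, EuclideanSpace.single_apply]
lemma inner_e1e2 : ⟪e1, e2⟫ = (0:ℝ) := by
  simp [e1, e2, EuclideanSpace.inner_single_left, EuclideanSpace.single_apply]
lemma inner_e2e1 : ⟪e2, e1⟫ = (0:ℝ) := by
  simp [e1, e2, EuclideanSpace.inner_single_left, EuclideanSpace.single_apply]

lemma inner_comb (a b : ℝ) (v : EuclideanSpace ℝ (Fin 2)) :
    ⟪(-(a) • e1 - b • e2 : EuclideanSpace ℝ (Fin 2)), v⟫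
      = -(a * ⟪e1, v⟫) - b * ⟪e2, v⟫ := by
  simp [inner_sub_left, real_inner_smul_left]

/-- Feasibility converse of Lemma 1: if some corner condition holds, the
corresponding corner control `u = −x u_max e₁ − y u_max e₂` is feasible. -/
theorem stmt_10 (umax α : ℝ) (humax : 0 < umax) (hα : 1 ≤ α)
    (r rdot : EuclideanSpace ℝ (Fin 2)) (hr : r ≠ 0)
    (x y : ℝ) (hx : x ∈ ({1 / α, 1} : Set ℝ)) (hy : y ∈ ({1 / α, 1} : Set ℝ))
    (hcorner : ‖rdot‖ * (x * ⟪e1, ‖r‖⁻¹ • r⟫ + y * ⟪e2, ‖r‖⁻¹ • r⟫)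
      ≥ ⟪rdot, ‖r‖⁻¹ • r⟫) :
    infNorm (-(x * umax) • e1 - (y * umax) • e2) ≤ umax ∧
    ⟪(-(x * umax) • e1 - (y * umax) • e2 : EuclideanSpace ℝ (Fin 2)), e1⟫
      ≤ -(umax / α) ∧
    ⟪(-(x * umax) • e1 - (y * umax) • e2 : EuclideanSpace ℝ (Fin 2)), e2⟫
      ≤ -(umax / α) ∧
    (‖rdot‖ / umax) *
        ⟪(-(x * umax) • e1 - (y * umax) • e2 : EuclideanSpace ℝ (Fin 2)),
          ‖r‖⁻¹ • r⟫ + ⟪rdot, ‖r‖⁻¹ • r⟫ ≤ 0 := by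
  have hα0 : (0:ℝ) < α := lt_of_lt_of_le one_pos hα
  have hinv : 1 / α ≤ 1 := by
    rw [div_le_one hα0]; exact hα
  have hinv0 : (0:ℝ) < 1 / α := by positivity
  have hxb : 1 / α ≤ x ∧ x ≤ 1 := by
    rcases hx with h | h
    · subst h; exact ⟨le_refl _, hinv⟩
    · simp only [Set.mem_singleton_iff] at h; subst h; exact ⟨hinv, le_refl _⟩
  have hyb : 1 / α ≤ y ∧ y ≤ 1 := by
    rcases hy with h | h
    · subst h; exact ⟨le_refl _, hinv⟩
    · simp only [Set.mem_singleton_iff] at h; subst h; exact ⟨hinv, le_refl _⟩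
  have hx0 : 0 < x := lt_of_lt_of_le hinv0 hxb.1
  have hy0 : 0 < y := lt_of_lt_of_le hinv0 hyb.1
  refine ⟨?_, ?_, ?_, ?_⟩
  · unfold infNorm
    rw [inner_comb, inner_comb, inner_e1e1, inner_e2e2, inner_e1e2, inner_e2e1]
    have h1 : |-(x * umax * 1) - y * umax * 0| ≤ umax := by
      rw [abs_of_nonpos (by nlinarith)]
      nlinarith [hxb.2]
    have h2 : |-(x * umax * 0) - y * umax * 1| ≤ umax := by
      rw [abs_of_nonpos (by nlinarith)]
      nlinarith [hyb.2]
    exact max_le h1 h2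
  · rw [inner_comb, inner_e1e1, inner_e2e1]
    have : umax / α ≤ x * umax := by
      have := hxb.1
      rw [div_le_iff₀ hα0] at this ⊢
      nlinarith
    linarith
  · rw [inner_comb, inner_e2e2, inner_e1e2]
    have : umax / α ≤ y * umax := by
      have := hyb.1
      rw [div_le_iff₀ hα0] at this ⊢
      nlinarith
    linarith
  · rw [inner_comb]
    have humax' : umax ≠ 0 := ne_of_gt humax
    have key : (‖rdot‖ / umax) * (-(x * umax * ⟪e1, ‖r‖⁻¹ • r⟫) - y * umax * ⟪e2, ‖r‖⁻¹ • r⟫)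
        = -(‖rdot‖ * (x * ⟪e1, ‖r‖⁻¹ • r⟫ + y * ⟪e2, ‖r‖⁻¹ • r⟫)) := by
      field_simp
      ring
    rw [key]
    linarith [hcorner]
end

section
/- (Lemma 2 of the paper.) Let u_max > 0 and α ≥ 1 be real constants, e₁ = (1,0), e₂ = (0,1). Let d, ḋ ∈ ℝ² with d ≠ 0 and set d̂ = d/‖d‖. Suppose that for every (x, y) ∈ {1/α, 1} × {1/α, 1} the inequality ‖ḋ‖ · (x · ⟪e₁, d̂⟫ + y · ⟪e₂, d̂⟫) ≤ ⟪ḋ, d̂⟫ fails (i.e., ‖ḋ‖(x⟪e₁, d̂⟫ + y⟪e₂, d̂⟫) > ⟪ḋ, d̂⟫ for all four corner pairs). Then there is no u ∈ ℝ² satisfying simultaneously: ‖u‖_∞ ≤ u_max, ⟪u, e₁⟫ ≤ −u_max/α, ⟪u, e₂⟫ ≤ −u_max/α, and −(‖ḋ‖/u_max) · ⟪u, d̂⟫ − ⟪ḋ, d̂⟫ ≤ 0. -/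
open scoped RealInnerProductSpace

/-! The four corner conditions say that the affine function `(x, y) ↦ ‖ḋ‖ (x ⟪e₁, d̂⟫ + y ⟪e₂, d̂⟫)`
exceeds `⟪ḋ, d̂⟫` at the corners of the box `[1/α, 1]²`, hence on the whole box, since each of its
two summands is minimised at an endpoint. A feasible control `u` would give the point
`(-⟪u, e₁⟫ / u_max, -⟪u, e₂⟫ / u_max)` of that box, at which the predator constraint says the
opposite. -/

theorem exists_mem_pair_mul_le {a b x : ℝ} (hx : x ∈ Set.Icc a b) (c : ℝ) :
    ∃ x₀ ∈ ({a, b} : Set ℝ), x₀ * c ≤ x * c := by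
  rcases le_total 0 c with hc | hc
  · exact ⟨a, Set.mem_insert _ _, mul_le_mul_of_nonneg_right hx.1 hc⟩
  · exact ⟨b, Set.mem_insert_of_mem _ rfl, mul_le_mul_of_nonpos_right hx.2 hc⟩

theorem inner_eq_inner_e1_mul_add_inner_e2_mul (u v : EuclideanSpace ℝ (Fin 2)) :
    ⟪u, v⟫ = ⟪u, e1⟫ * ⟪e1, v⟫ + ⟪u, e2⟫ * ⟪e2, v⟫ := by
  rw [← (EuclideanSpace.basisFun (Fin 2) ℝ).sum_inner_mul_inner u v, Fin.sum_univ_two]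
  simp [e1, e2]

theorem neg_div_mem_Icc_of_abs_le {t m α : ℝ} (hm : 0 < m) (habs : |t| ≤ m)
    (ht : t ≤ -(m / α)) : -t / m ∈ Set.Icc (1 / α) 1 := by
  constructor
  · rw [le_div_iff₀ hm, one_div_mul_eq_div]
    linarith
  · rw [div_le_one hm]
    linarith [neg_abs_le t]

theorem stmt_11_general (umax α : ℝ) (humax : 0 < umax)
    (d ddot : EuclideanSpace ℝ (Fin 2))
    (hcorner : ∀ x ∈ ({1 / α, 1} : Set ℝ), ∀ y ∈ ({1 / α, 1} : Set ℝ),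
      ‖ddot‖ * (x * ⟪e1, ‖d‖⁻¹ • d⟫ + y * ⟪e2, ‖d‖⁻¹ • d⟫)
        > ⟪ddot, ‖d‖⁻¹ • d⟫) :
    ¬ ∃ u : EuclideanSpace ℝ (Fin 2),
      infNorm u ≤ umax ∧
      ⟪u, e1⟫ ≤ -(umax / α) ∧
      ⟪u, e2⟫ ≤ -(umax / α) ∧
      -((‖ddot‖ / umax) * ⟪u, ‖d‖⁻¹ • d⟫) - ⟪ddot, ‖d‖⁻¹ • d⟫ ≤ 0 := by
  rintro ⟨u, hinf, h1, h2, hpred⟩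
  set v := ‖d‖⁻¹ • d
  set x := -⟪u, e1⟫ / umax
  set y := -⟪u, e2⟫ / umax
  obtain ⟨x₀, hx₀, hx⟩ := exists_mem_pair_mul_le
    (neg_div_mem_Icc_of_abs_le humax ((le_max_left _ _).trans hinf) h1) ⟪e1, v⟫
  obtain ⟨y₀, hy₀, hy⟩ := exists_mem_pair_mul_le
    (neg_div_mem_Icc_of_abs_le humax ((le_max_right _ _).trans hinf) h2) ⟪e2, v⟫
  have hbox : ‖ddot‖ * (x₀ * ⟪e1, v⟫ + y₀ * ⟪e2, v⟫) ≤ ‖ddot‖ * (x * ⟪e1, v⟫ + y * ⟪e2, v⟫) := by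
    gcongr
  have hpoint : ‖ddot‖ * (x * ⟪e1, v⟫ + y * ⟪e2, v⟫) = (‖ddot‖ / umax) * -⟪u, v⟫ := by
    rw [inner_eq_inner_e1_mul_add_inner_e2_mul u v]
    simp only [x, y]
    field_simp
    ring
  linarith [hcorner x₀ hx₀ y₀ hy₀]

/-- Lemma 2 of the paper (constraint incompatibility with the predator): if none
of the four corner conditions hold, then no control simultaneously satisfies the
control bound, the two active-wall conditions, and the predator-avoidance
constraint. -/
theorem stmt_11 (umax α : ℝ) (humax : 0 < umax) (hα : 1 ≤ α)
    (d ddot : EuclideanSpace ℝ (Fin 2)) (hd : d ≠ 0)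
    (hcorner : ∀ x ∈ ({1 / α, 1} : Set ℝ), ∀ y ∈ ({1 / α, 1} : Set ℝ),
      ‖ddot‖ * (x * ⟪e1, ‖d‖⁻¹ • d⟫ + y * ⟪e2, ‖d‖⁻¹ • d⟫)
        > ⟪ddot, ‖d‖⁻¹ • d⟫) :
    ¬ ∃ u : EuclideanSpace ℝ (Fin 2),
      infNorm u ≤ umax ∧
      ⟪u, e1⟫ ≤ -(umax / α) ∧
      ⟪u, e2⟫ ≤ -(umax / α) ∧
      -((‖ddot‖ / umax) * ⟪u, ‖d‖⁻¹ • d⟫) - ⟪ddot, ‖d‖⁻¹ • d⟫ ≤ 0 :=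
  stmt_11_general umax α humax d ddot hcorner
end
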